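/- arXiv:1004.2342 — 3 statements merged into one kernel-verified Lean document; each statement's English description precedes it below -/
import Mathlib

section
/- Let (Ω, F, P) be a probability space, S a finite set, N ≥ 1, and X, Y : Ω → S^N random variables (S^N carrying the discrete σ-algebra). Suppose G : S^N × S^N → [0,1] is a stochastic matrix (Σ_y G(x,y) = 1 for each x) that is invariant under simultaneous permutations (G(σ(x),σ(y)) = G(x,y) for all permutations σ of {1,…,N}), and that the joint law satisfies P(X = x, Y = y) = P(X = x)·G(x,y) for all x, y ∈ S^N. Then for every function φ : P^N → ℝ, the conditional expectation E[φ(μ^N(Y)) | σ(X)] is almost surely equal to a σ(μ^N(X))-measurable function; equivalently, E[φ(μ^N(Y)) | σ(X)] = E[φ(μ^N(Y)) | σ(μ^N(X))] almost surely. -/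
open MeasureTheory

/-!
Given `X = x`, the law of `Y` is `G x ·`, so `E[ψ(Y) | σ(X)] = h(X)` with `ψ = φ ∘ μ^N` and
`h x = ∑ y, G x y * ψ y`. Both `G` and `ψ` are invariant under relabeling the `N` objects, hence
so is `h`; as two tuples with the same empirical measure differ by a relabeling, `h` factors
through `μ^N`. Thus `h(X)` is already `σ(μ^N(X))`-measurable, and the tower property identifies
it with `E[ψ(Y) | σ(μ^N(X))]` as well.
-/

noncomputable def empMeas {S : Type*} [Fintype S] [DecidableEq S] {N : ℕ}
    (x : Fin N → S) : S → ℝ :=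
  fun i => ((Finset.univ.filter fun n => x n = i).card : ℝ) / N

theorem Equiv.Perm.exists_comp_eq_of_card_fiber_eq {α γ : Type*} [Finite α] {f g : α → γ}
    (h : ∀ c, Nat.card {a // f a = c} = Nat.card {a // g a = c}) :
    ∃ σ : Equiv.Perm α, g ∘ σ = f :=
  have e := fun c => (Finite.card_eq.mp (h c)).some
  ⟨Equiv.ofFiberEquiv e, funext (Equiv.ofFiberEquiv_map e)⟩

theorem sum_kernel_mul_comp_perm {ι S : Type*} [Fintype ι] [DecidableEq ι] [Fintype S]
    {G : (ι → S) → (ι → S) → ℝ}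
    (hG : ∀ (σ : Equiv.Perm ι) x y, G (x ∘ σ) (y ∘ σ) = G x y)
    {ψ : (ι → S) → ℝ} (hψ : ∀ (σ : Equiv.Perm ι) y, ψ (y ∘ σ) = ψ y)
    (σ : Equiv.Perm ι) (x : ι → S) :
    ∑ y, G (x ∘ σ) y * ψ y = ∑ y, G x y * ψ y :=
  (Fintype.sum_equiv (σ.symm.arrowCongr (Equiv.refl S)) _ _ fun y => by
    change _ = G (x ∘ σ) (y ∘ σ) * ψ (y ∘ σ)
    rw [hG, hψ]).symm

section Relabeling

variable {S : Type*} [Fintype S] [DecidableEq S] {N : ℕ}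

theorem empMeas_comp_perm (y : Fin N → S) (σ : Equiv.Perm (Fin N)) :
    empMeas (y ∘ σ) = empMeas y := by
  funext i
  simp only [empMeas, ← Fintype.card_subtype]
  exact congrArg (fun n : ℕ => (n : ℝ) / N)
    (Fintype.card_congr (σ.subtypeEquiv fun _ => Iff.rfl))

theorem exists_perm_comp_eq_of_empMeas_eq {x x' : Fin N → S} (h : empMeas x = empMeas x') :
    ∃ σ : Equiv.Perm (Fin N), x' ∘ σ = x := by
  -- for `N = 0` the division by `N` forgets the counts, but then all tuples are equal
  rcases Nat.eq_zero_or_pos N with rfl | hN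
  · exact ⟨1, Subsingleton.elim _ _⟩
  refine Equiv.Perm.exists_comp_eq_of_card_fiber_eq fun i => ?_
  have hi := congrFun h i
  have hN' : (N : ℝ) ≠ 0 := Nat.cast_ne_zero.mpr hN.ne'
  rw [empMeas, empMeas, div_left_inj' hN', Nat.cast_inj] at hi
  simpa only [Nat.card_eq_fintype_card, Fintype.card_subtype] using hi

theorem factorsThrough_empMeas {β : Type*} {h : (Fin N → S) → β}
    (hh : ∀ (σ : Equiv.Perm (Fin N)) x, h (x ∘ σ) = h x) : h.FactorsThrough empMeas := by
  intro x x' hxx'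
  obtain ⟨σ, rfl⟩ := exists_perm_comp_eq_of_empMeas_eq hxx'
  exact hh σ x'

end Relabeling

theorem condExp_ae_eq_of_condExp_ae_eq_of_le {Ω E : Type*} [NormedAddCommGroup E]
    [NormedSpace ℝ E] [CompleteSpace E] {m₁ m₂ m₀ : MeasurableSpace Ω}
    {μ : Measure Ω} (hm₂₁ : m₂ ≤ m₁) (hm₁ : m₁ ≤ m₀)
    [SigmaFinite (μ.trim (hm₂₁.trans hm₁))] {f g : Ω → E}
    (hfg : μ[f | m₁] =ᵐ[μ] g) (hg : AEStronglyMeasurable[m₂] g μ) :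
    μ[f | m₂] =ᵐ[μ] g := by
  have := sigmaFiniteTrim_mono (μ := μ) hm₁ hm₂₁
  calc μ[f | m₂] =ᵐ[μ] μ[μ[f | m₁] | m₂] := (condExp_condExp_of_le hm₂₁ hm₁).symm
    _ =ᵐ[μ] μ[g | m₂] := condExp_congr_ae hfg
    _ =ᵐ[μ] g := condExp_of_aestronglyMeasurable' _ hg (integrable_condExp.congr hfg)

section DiscreteConditioning

variable {Ω α : Type*} [MeasurableSpace Ω] {P : Measure Ω} [IsFiniteMeasure P] [Fintype α]
  {Z : Ω → α}

theorem integrable_comp_of_measurable_top (hZ : @Measurable Ω α _ ⊤ Z) (u : α → ℝ) :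
    Integrable (u ∘ Z) P :=
  letI : MeasurableSpace α := ⊤
  Integrable.of_finite.comp_measurable hZ

theorem integral_comp_eq_sum (hZ : @Measurable Ω α _ ⊤ Z) (u : α → ℝ) :
    ∫ ω, u (Z ω) ∂P = ∑ a, P.real (Z ⁻¹' {a}) * u a := by
  let _ : MeasurableSpace α := ⊤
  rw [← integral_map hZ.aemeasurable (measurable_from_top).aestronglyMeasurable,
    integral_fintype Integrable.of_finite]
  simp only [map_measureReal_apply hZ (measurableSet_singleton _), smul_eq_mul]

theorem comp_ae_eq_condExp_comap (hZ : @Measurable Ω α _ ⊤ Z) {f : Ω → ℝ}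
    (hf : Integrable f P) {g : α → ℝ}
    (hg : ∀ a, ∫ ω in Z ⁻¹' {a}, f ω ∂P = P.real (Z ⁻¹' {a}) * g a) :
    g ∘ Z =ᵐ[P] P[f | MeasurableSpace.comap Z ⊤] := by
  classical
  refine ae_eq_condExp_of_forall_setIntegral_eq hZ.comap_le hf
    (fun _ _ _ => (integrable_comp_of_measurable_top hZ g).integrableOn) ?_
    (measurable_from_top.comp (comap_measurable Z)).aestronglyMeasurable
  rintro _ ⟨B, -, rfl⟩ -
  have hB : Z ⁻¹' B = ⋃ a ∈ Finset.univ.filter (· ∈ B), Z ⁻¹' {a} := by ext; simp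
  have hdisj := Set.pairwiseDisjoint_fiber Z ↑(Finset.univ.filter (· ∈ B))
  rw [hB, integral_biUnion_finset _ (fun a _ => hZ trivial) hdisj
      (fun _ _ => (integrable_comp_of_measurable_top hZ g).integrableOn),
    integral_biUnion_finset _ (fun a _ => hZ trivial) hdisj (fun _ _ => hf.integrableOn)]
  refine Finset.sum_congr rfl fun a _ => ?_
  have hconst : ∫ ω in Z ⁻¹' {a}, (g ∘ Z) ω ∂P = ∫ _ in Z ⁻¹' {a}, g a ∂P :=
    setIntegral_congr_fun (hZ trivial) fun ω hω => congrArg g hω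
  rw [hconst, setIntegral_const, smul_eq_mul, hg]

theorem condExp_comp_ae_eq_sum_kernel {β : Type*} [Fintype β] {X : Ω → α} {Y : Ω → β}
    (hX : @Measurable Ω α _ ⊤ X) (hY : @Measurable Ω β _ ⊤ Y) {G : α → β → ℝ}
    (hjoint : ∀ x y, P.real {ω | X ω = x ∧ Y ω = y} = P.real {ω | X ω = x} * G x y)
    (ψ : β → ℝ) :
    P[ψ ∘ Y | MeasurableSpace.comap X ⊤] =ᵐ[P] fun ω => ∑ y, G (X ω) y * ψ y := by
  refine (comp_ae_eq_condExp_comap (g := fun x => ∑ y, G x y * ψ y) hX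
    (integrable_comp_of_measurable_top hY ψ) fun x => ?_).symm
  refine (integral_comp_eq_sum (P := P.restrict _) hY ψ).trans ?_
  rw [Finset.mul_sum]
  refine Finset.sum_congr rfl fun y _ => ?_
  rw [measureReal_restrict_apply (hY trivial), Set.inter_comm, ← mul_assoc]
  exact congrArg (· * ψ y) (hjoint x y)

end DiscreteConditioning

theorem condexp_occupancy_markov_general {Ω : Type*} [MeasurableSpace Ω]
    (P : Measure Ω) [IsProbabilityMeasure P]
    {S : Type*} [Fintype S] [DecidableEq S] {N : ℕ}
    (X Y : Ω → (Fin N → S))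
    (hX : @Measurable Ω (Fin N → S) _ ⊤ X)
    (hY : @Measurable Ω (Fin N → S) _ ⊤ Y)
    (G : (Fin N → S) → (Fin N → S) → ℝ)
    (hinv : ∀ (σ : Equiv.Perm (Fin N)) (x y : Fin N → S),
      G (fun n => x (σ.symm n)) (fun n => y (σ.symm n)) = G x y)
    (hjoint : ∀ x y : Fin N → S,
      (P {ω | X ω = x ∧ Y ω = y}).toReal = (P {ω | X ω = x}).toReal * G x y)
    (φ : Set.range (empMeas (S := S) (N := N)) → ℝ) :
    P[fun ω => φ ⟨empMeas (Y ω), ⟨Y ω, rfl⟩⟩ | MeasurableSpace.comap X ⊤]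
      =ᵐ[P]
    P[fun ω => φ ⟨empMeas (Y ω), ⟨Y ω, rfl⟩⟩ |
        MeasurableSpace.comap (fun ω => empMeas (X ω)) ⊤] := by
  set ψ : (Fin N → S) → ℝ := fun y => φ ⟨empMeas y, y, rfl⟩
  have hψ (σ : Equiv.Perm (Fin N)) (y : Fin N → S) : ψ (y ∘ σ) = ψ y :=
    congrArg φ (Subtype.ext (empMeas_comp_perm y σ))
  set h : (Fin N → S) → ℝ := fun x => ∑ y, G x y * ψ y
  have hcond : P[ψ ∘ Y | MeasurableSpace.comap X ⊤] =ᵐ[P] h ∘ X :=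
    condExp_comp_ae_eq_sum_kernel hX hY hjoint ψ
  have hfactor : h.FactorsThrough empMeas :=
    factorsThrough_empMeas (sum_kernel_mul_comp_perm (fun σ => hinv σ.symm) hψ)
  obtain ⟨k, hk⟩ := (Function.factorsThrough_iff h).mp hfactor
  have hmeas : Measurable[MeasurableSpace.comap (empMeas ∘ X) ⊤] (h ∘ X) := by
    rw [hk, Function.comp_assoc]
    exact measurable_from_top.comp (comap_measurable (empMeas ∘ X))
  have hle : MeasurableSpace.comap (empMeas ∘ X) ⊤ ≤ MeasurableSpace.comap X ⊤ := by
    rw [← MeasurableSpace.comap_comp]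
    exact MeasurableSpace.comap_mono le_top
  exact hcond.trans (condExp_ae_eq_of_condExp_ae_eq_of_le hle hX.comap_le hcond
    hmeas.aestronglyMeasurable).symm

/-- One-step Markov property of the occupancy measure: if the joint law of `(X, Y)`
is given by a stochastic matrix `G` invariant under simultaneous relabeling of objects,
then for any `φ : P^N → ℝ`, `E[φ(μ^N(Y)) | σ(X)] = E[φ(μ^N(Y)) | σ(μ^N(X))]` a.s. -/
theorem condexp_occupancy_markov {Ω : Type*} [MeasurableSpace Ω]
    (P : Measure Ω) [IsProbabilityMeasure P]
    {S : Type*} [Fintype S] [DecidableEq S] {N : ℕ} (hN : 1 ≤ N)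
    (X Y : Ω → (Fin N → S))
    (hX : @Measurable Ω (Fin N → S) _ ⊤ X)
    (hY : @Measurable Ω (Fin N → S) _ ⊤ Y)
    (G : (Fin N → S) → (Fin N → S) → ℝ)
    (hG0 : ∀ x y, 0 ≤ G x y) (hG1 : ∀ x y, G x y ≤ 1)
    (hGsum : ∀ x, ∑ y : Fin N → S, G x y = 1)
    (hinv : ∀ (σ : Equiv.Perm (Fin N)) (x y : Fin N → S),
      G (fun n => x (σ.symm n)) (fun n => y (σ.symm n)) = G x y)
    (hjoint : ∀ x y : Fin N → S,
      (P {ω | X ω = x ∧ Y ω = y}).toReal = (P {ω | X ω = x}).toReal * G x y)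
    (φ : Set.range (empMeas (S := S) (N := N)) → ℝ) :
    P[fun ω => φ ⟨empMeas (Y ω), ⟨Y ω, rfl⟩⟩ | MeasurableSpace.comap X ⊤]
      =ᵐ[P]
    P[fun ω => φ ⟨empMeas (Y ω), ⟨Y ω, rfl⟩⟩ |
        MeasurableSpace.comap (fun ω => empMeas (X ω)) ⊤] :=
  condexp_occupancy_markov_general P X Y hX hY G hinv hjoint φ
end

section
/- Let (W_k)_{k∈ℕ} be a sequence of square-integrable, non-negative real random variables adapted to a filtration (F_k)_{k∈ℕ}, with W_0 = 0 almost surely, and constants α, β ≥ 0 such that E[W_{k+1} | F_k] ≤ α and E[W_{k+1}² | F_k] ≤ β almost surely for all k. Let Y_n = Σ_{k=0}^n W_k. Then for all n ∈ ℕ: E[Y_n²] ≤ n·β + n(n+1)·α². -/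
/-!
Write `Y n = ∑_{k ≤ n} W k`, so `Y (n + 1) = Y n + W (n + 1)` with `Y n` measurable for `ℱ n`.
Pulling `Y n` out of the conditional expectation gives `E[Y n · W (n + 1)] ≤ α E[Y n] ≤ n α²`,
and `E[W (n + 1)²] ≤ β`; expanding the square yields
`E[Y (n + 1)²] ≤ E[Y n²] + 2 n α² + β`, and the bound follows by induction from `Y 0 = 0`.
-/

open MeasureTheory Finset

section CondExpBounds

variable {Ω : Type*} {m m0 : MeasurableSpace Ω} {μ : Measure Ω}

theorem integral_le_of_condExp_le [IsProbabilityMeasure μ] (hm : m ≤ m0) {f : Ω → ℝ} {c : ℝ}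
    (hf : μ[f | m] ≤ᵐ[μ] fun _ => c) : ∫ ω, f ω ∂μ ≤ c :=
  calc ∫ ω, f ω ∂μ = ∫ ω, (μ[f | m]) ω ∂μ := (integral_condExp hm).symm
    _ ≤ ∫ _, c ∂μ := integral_mono_ae integrable_condExp (integrable_const c) hf
    _ = c := by simp

theorem integral_mul_le_of_condExp_le (hm : m ≤ m0) [SigmaFinite (μ.trim hm)] {Y W : Ω → ℝ}
    {c : ℝ} (hYm : StronglyMeasurable[m] Y) (hY0 : 0 ≤ᵐ[μ] Y) (hY : Integrable Y μ)
    (hW : Integrable W μ) (hYW : Integrable (Y * W) μ) (hc : μ[W | m] ≤ᵐ[μ] fun _ => c) :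
    ∫ ω, Y ω * W ω ∂μ ≤ c * ∫ ω, Y ω ∂μ := by
  have hpull : μ[Y * W | m] =ᵐ[μ] Y * μ[W | m] :=
    condExp_mul_of_stronglyMeasurable_left hYm hYW hW
  calc ∫ ω, Y ω * W ω ∂μ = ∫ ω, (μ[Y * W | m]) ω ∂μ := (integral_condExp hm).symm
    _ = ∫ ω, Y ω * (μ[W | m]) ω ∂μ := integral_congr_ae hpull
    _ ≤ ∫ ω, Y ω * c ∂μ := by
        refine integral_mono_ae (integrable_condExp.congr hpull) (hY.mul_const c) ?_
        filter_upwards [hY0, hc] with ω hY0 hc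
        exact mul_le_mul_of_nonneg_left hc hY0
    _ = c * ∫ ω, Y ω ∂μ := by rw [integral_mul_const, mul_comm]

theorem integral_sq_add_le_of_condExp_le [IsProbabilityMeasure μ] (hm : m ≤ m0)
    {Y W : Ω → ℝ} {α β : ℝ} (hYm : StronglyMeasurable[m] Y) (hY0 : 0 ≤ᵐ[μ] Y)
    (hY : MemLp Y 2 μ) (hW : MemLp W 2 μ) (hα : μ[W | m] ≤ᵐ[μ] fun _ => α)
    (hβ : μ[fun ω => W ω ^ 2 | m] ≤ᵐ[μ] fun _ => β) :
    ∫ ω, (Y ω + W ω) ^ 2 ∂μ ≤ ∫ ω, Y ω ^ 2 ∂μ + 2 * α * ∫ ω, Y ω ∂μ + β := by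
  have hYW : Integrable (Y * W) μ := hY.integrable_mul hW
  have hcross := integral_mul_le_of_condExp_le hm hYm hY0 (hY.integrable one_le_two)
    (hW.integrable one_le_two) hYW hα
  have hsq := integral_le_of_condExp_le hm hβ
  have hexpand : ∫ ω, (Y ω + W ω) ^ 2 ∂μ
      = ∫ ω, Y ω ^ 2 ∂μ + 2 * ∫ ω, Y ω * W ω ∂μ + ∫ ω, W ω ^ 2 ∂μ := by
    have hcross2 : Integrable (fun ω => 2 * (Y ω * W ω)) μ := hYW.const_mul 2
    have hfirst : Integrable (fun ω => Y ω ^ 2 + 2 * (Y ω * W ω)) μ :=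
      hY.integrable_sq.add hcross2
    simp_rw [add_sq, mul_assoc]
    rw [integral_add hfirst hW.integrable_sq,
      integral_add hY.integrable_sq hcross2, integral_const_mul]
  linarith

end CondExpBounds

theorem integral_sum_range_succ_le {Ω : Type*} {m0 : MeasurableSpace Ω} {P : Measure Ω}
    [IsProbabilityMeasure P] {ℱ : Filtration ℕ m0} {W : ℕ → Ω → ℝ} {α : ℝ}
    (hW : ∀ k, Integrable (W k) P) (hW0 : W 0 =ᵐ[P] 0)
    (hcond : ∀ k, P[W (k + 1) | ℱ k] ≤ᵐ[P] fun _ => α) (n : ℕ) :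
    ∫ ω, ∑ k ∈ range (n + 1), W k ω ∂P ≤ n * α := by
  have hbound : ∑ k ∈ range n, ∫ ω, W (k + 1) ω ∂P ≤ ∑ _k ∈ range n, α :=
    sum_le_sum fun k _ => integral_le_of_condExp_le (ℱ.le k) (hcond k)
  rw [integral_finsetSum _ fun k _ => hW k, sum_range_succ', integral_congr_ae hW0]
  simpa using hbound

theorem second_moment_partial_sums_general {Ω : Type*} {m0 : MeasurableSpace Ω}
    (P : Measure Ω) [IsProbabilityMeasure P]
    (ℱ : Filtration ℕ m0) (W : ℕ → Ω → ℝ)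
    (hadapt : Adapted ℱ W)
    (hL2 : ∀ k, MemLp (W k) 2 P)
    (hnonneg : ∀ k, 0 ≤ᵐ[P] W k)
    (hW0 : W 0 =ᵐ[P] 0)
    (α β : ℝ) (hα : 0 ≤ α)
    (hcond1 : ∀ k, P[W (k + 1) | ℱ k] ≤ᵐ[P] fun _ => α)
    (hcond2 : ∀ k, P[fun ω => (W (k + 1) ω) ^ 2 | ℱ k] ≤ᵐ[P] fun _ => β)
    (n : ℕ) :
    ∫ ω, (∑ k ∈ Finset.range (n + 1), W k ω) ^ 2 ∂P
      ≤ n * β + n * (n + 1) * α ^ 2 := by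
  induction n with
  | zero =>
    rw [integral_congr_ae (g := 0) (by filter_upwards [hW0] with ω h; simp [h])]
    simp
  | succ n ih =>
    have hmeas : StronglyMeasurable[ℱ n] fun ω => ∑ k ∈ range (n + 1), W k ω :=
      Finset.stronglyMeasurable_fun_sum _ fun k hk =>
        ((hadapt k).mono (ℱ.mono (mem_range_succ_iff.mp hk)) le_rfl).stronglyMeasurable
    have hpos : 0 ≤ᵐ[P] fun ω => ∑ k ∈ range (n + 1), W k ω := by
      filter_upwards [ae_all_iff.mpr hnonneg] with ω hω
      exact sum_nonneg fun k _ => hω k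
    have hstep := integral_sq_add_le_of_condExp_le (ℱ.le n) hmeas hpos
      (memLp_finsetSum _ fun k _ => hL2 k) (hL2 (n + 1)) (hcond1 n) (hcond2 n)
    have hmean :=
      integral_sum_range_succ_le (fun k => (hL2 k).integrable one_le_two) hW0 hcond1 n
    simp_rw [sum_range_succ _ (n + 1)]
    push_cast
    linarith [mul_le_mul_of_nonneg_left hmean hα, sq_nonneg α]

/-- Second-moment bound for partial sums: under the conditional moment bounds
`E[W_{k+1}|F_k] ≤ α` and `E[W_{k+1}²|F_k] ≤ β`, with `W_0 = 0`,
`E[Y_n²] ≤ nβ + n(n+1)α²` where `Y_n = Σ_{k=0}^n W_k`. -/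
theorem second_moment_partial_sums {Ω : Type*} {m0 : MeasurableSpace Ω}
    (P : Measure Ω) [IsProbabilityMeasure P]
    (ℱ : Filtration ℕ m0) (W : ℕ → Ω → ℝ)
    (hadapt : Adapted ℱ W)
    (hL2 : ∀ k, MemLp (W k) 2 P)
    (hnonneg : ∀ k, 0 ≤ᵐ[P] W k)
    (hW0 : W 0 =ᵐ[P] 0)
    (α β : ℝ) (hα : 0 ≤ α) (hβ : 0 ≤ β)
    (hcond1 : ∀ k, P[W (k + 1) | ℱ k] ≤ᵐ[P] fun _ => α)
    (hcond2 : ∀ k, P[fun ω => (W (k + 1) ω) ^ 2 | ℱ k] ≤ᵐ[P] fun _ => β)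
    (n : ℕ) :
    ∫ ω, (∑ k ∈ Finset.range (n + 1), W k ω) ^ 2 ∂P
      ≤ n * β + n * (n + 1) * α ^ 2 :=
  second_moment_partial_sums_general P ℱ W hadapt hL2 hnonneg hW0 α β hα hcond1 hcond2 n
end

section
/- Let S ≥ 1, let (A, d) be a metric space, K ≥ 0, T > 0, and let f : ℝ^S × A → ℝ^S satisfy ‖f(m,a) − f(m',a')‖ ≤ K·(‖m − m'‖ + d(a,a')) for all m, m' ∈ ℝ^S and a, a' ∈ A. Let α, β : [0,T] → A be measurable control functions with s ↦ d(α(s), β(s)) integrable, and let m₁, m₂ : [0,T] → ℝ^S be continuous functions satisfying the integral equations m₁(t) = m₀ + ∫₀^t f(m₁(s), α(s)) ds and m₂(t) = m₀ + ∫₀^t f(m₂(s), β(s)) ds for all t ∈ [0,T], with the same initial condition m₀. Then for every t ∈ [0,T]: ‖m₁(t) − m₂(t)‖ ≤ K·e^{K·t}·∫₀^T d(α(s), β(s)) ds. -/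
open MeasureTheory Set Real

/-!
Subtracting the two integral equations and using the Lipschitz bound on `f` gives
`‖m₁ u - m₂ u‖ ≤ K ∫₀ᵀ d(α, β) + K ∫₀ᵘ ‖m₁ - m₂‖` on `[0, T]`, and Grönwall's inequality in
integral form turns this into the exponential bound. The integral form reduces to Mathlib's
differential Grönwall inequality applied to the primitive `u ↦ ∫₀ᵘ ‖m₁ - m₂‖`.
-/

theorem mul_gronwallBound_zero_add (K ε x : ℝ) :
    K * gronwallBound 0 K ε x + ε = ε * exp (K * x) := by
  by_cases hK : K = 0
  · simp [hK, gronwallBound_K0]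
  · simp only [gronwallBound_of_K_ne_0 hK]
    field_simp
    ring

theorem ContinuousOn.hasDerivWithinAt_integral_Icc {E : Type*} [NormedAddCommGroup E]
    [NormedSpace ℝ E] [CompleteSpace E] {g : ℝ → E} {a b x : ℝ}
    (hg : ContinuousOn g (Icc a b)) (hx : x ∈ Icc a b) :
    HasDerivWithinAt (fun u => ∫ y in a..u, g y) (g x) (Icc a b) x := by
  have : Fact (x ∈ Icc a b) := ⟨hx⟩ -- for the `FTCFilter` instance on `Icc a b`
  exact intervalIntegral.integral_hasDerivWithinAt_right
    ((hg.mono (Icc_subset_Icc_right hx.2)).intervalIntegrable_of_Icc hx.1)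
    (hg.stronglyMeasurableAtFilter_nhdsWithin measurableSet_Icc x) (hg x hx)

theorem le_mul_exp_of_le_add_mul_integral {g : ℝ → ℝ} {a b c K : ℝ} (hK : 0 ≤ K)
    (hg : ContinuousOn g (Icc a b)) (h : ∀ x ∈ Icc a b, g x ≤ c + K * ∫ y in a..x, g y) :
    ∀ x ∈ Icc a b, g x ≤ c * exp (K * (x - a)) := by
  set G : ℝ → ℝ := fun u => ∫ y in a..u, g y
  have hG : ∀ x ∈ Icc a b, HasDerivWithinAt G (g x) (Icc a b) x := fun x hx =>
    hg.hasDerivWithinAt_integral_Icc hx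
  have hG_le : ∀ x ∈ Icc a b, G x ≤ gronwallBound 0 K c (x - a) :=
    le_gronwallBound_of_liminf_deriv_right_le (f' := g)
      (fun x hx => (hG x hx).continuousWithinAt)
      (fun x hx _ hr => ((hG x (Ico_subset_Icc_self hx)).mono_of_mem_nhdsWithin
        (Icc_mem_nhdsGE_of_mem hx)).liminf_right_slope_le hr)
      (by simp [G]) (fun x hx => by linarith [h x (Ico_subset_Icc_self hx)])
  intro x hx
  calc g x ≤ c + K * G x := h x hx
    _ ≤ K * gronwallBound 0 K c (x - a) + c := by nlinarith [hG_le x hx]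
    _ = c * exp (K * (x - a)) := mul_gronwallBound_zero_add K c (x - a)

theorem norm_sub_le_integral_of_integral_eq {E A : Type*} [NormedAddCommGroup E]
    [NormedSpace ℝ E] [PseudoMetricSpace A] {f : E → A → E} {K : ℝ}
    (hf : ∀ m m' a a', ‖f m a - f m' a'‖ ≤ K * (‖m - m'‖ + dist a a'))
    {α β : ℝ → A} {m₀ : E} {m₁ m₂ : ℝ → E} {a u : ℝ} (hau : a ≤ u)
    (hm : IntervalIntegrable (fun s => ‖m₁ s - m₂ s‖) volume a u)
    (hd : IntervalIntegrable (fun s => dist (α s) (β s)) volume a u)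
    (hint₁ : IntervalIntegrable (fun s => f (m₁ s) (α s)) volume a u)
    (hint₂ : IntervalIntegrable (fun s => f (m₂ s) (β s)) volume a u)
    (heq₁ : m₁ u = m₀ + ∫ s in a..u, f (m₁ s) (α s))
    (heq₂ : m₂ u = m₀ + ∫ s in a..u, f (m₂ s) (β s)) :
    ‖m₁ u - m₂ u‖ ≤ K * ((∫ s in a..u, ‖m₁ s - m₂ s‖) + ∫ s in a..u, dist (α s) (β s)) := by
  have hdiff : m₁ u - m₂ u = ∫ s in a..u, (f (m₁ s) (α s) - f (m₂ s) (β s)) := by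
    rw [intervalIntegral.integral_sub hint₁ hint₂, heq₁, heq₂, add_sub_add_left_eq_sub]
  calc ‖m₁ u - m₂ u‖ ≤ ∫ s in a..u, ‖f (m₁ s) (α s) - f (m₂ s) (β s)‖ := by
        rw [hdiff]; exact intervalIntegral.norm_integral_le_integral_norm hau
    _ ≤ ∫ s in a..u, K * (‖m₁ s - m₂ s‖ + dist (α s) (β s)) :=
        intervalIntegral.integral_mono_on hau (hint₁.sub hint₂).norm ((hm.add hd).const_mul K)
          fun s _ => hf _ _ _ _
    _ = K * ((∫ s in a..u, ‖m₁ s - m₂ s‖) + ∫ s in a..u, dist (α s) (β s)) := by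
        rw [intervalIntegral.integral_const_mul, intervalIntegral.integral_add hm hd]

theorem trajectories_dist_le_of_controls_general {A : Type*} [MetricSpace A]
    (S : ℕ) (K T : ℝ) (hK : 0 ≤ K)
    (f : EuclideanSpace ℝ (Fin S) → A → EuclideanSpace ℝ (Fin S))
    (hf : ∀ (m m' : EuclideanSpace ℝ (Fin S)) (a a' : A),
      ‖f m a - f m' a'‖ ≤ K * (‖m - m'‖ + dist a a'))
    (α β : ℝ → A)
    (hd : IntervalIntegrable (fun s => dist (α s) (β s)) volume 0 T)
    (m₀ : EuclideanSpace ℝ (Fin S))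
    (m₁ m₂ : ℝ → EuclideanSpace ℝ (Fin S))
    (hm₁c : ContinuousOn m₁ (Set.Icc 0 T)) (hm₂c : ContinuousOn m₂ (Set.Icc 0 T))
    (hint₁ : IntervalIntegrable (fun s => f (m₁ s) (α s)) volume 0 T)
    (hint₂ : IntervalIntegrable (fun s => f (m₂ s) (β s)) volume 0 T)
    (heq₁ : ∀ t ∈ Set.Icc (0 : ℝ) T, m₁ t = m₀ + ∫ s in (0 : ℝ)..t, f (m₁ s) (α s))
    (heq₂ : ∀ t ∈ Set.Icc (0 : ℝ) T, m₂ t = m₀ + ∫ s in (0 : ℝ)..t, f (m₂ s) (β s)) :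
    ∀ t ∈ Set.Icc (0 : ℝ) T,
      ‖m₁ t - m₂ t‖ ≤ K * Real.exp (K * t) * ∫ s in (0 : ℝ)..T, dist (α s) (β s) := by
  intro t ht
  set C := ∫ s in (0 : ℝ)..T, dist (α s) (β s)
  have hsub : ∀ u ∈ Icc (0 : ℝ) T, uIcc 0 u ⊆ uIcc 0 T := fun u hu =>
    uIcc_subset_uIcc_left (Icc_subset_uIcc hu)
  have hcont : ContinuousOn (fun s => ‖m₁ s - m₂ s‖) (Icc 0 T) := (hm₁c.sub hm₂c).norm
  have hkey : ∀ u ∈ Icc (0 : ℝ) T,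
      ‖m₁ u - m₂ u‖ ≤ K * C + K * ∫ s in (0 : ℝ)..u, ‖m₁ s - m₂ s‖ := by
    intro u hu
    have hdist_le : ∫ s in (0 : ℝ)..u, dist (α s) (β s) ≤ C :=
      intervalIntegral.integral_mono_interval le_rfl hu.1 hu.2
        (Filter.Eventually.of_forall fun _ => dist_nonneg) hd
    calc ‖m₁ u - m₂ u‖
        ≤ K * ((∫ s in (0 : ℝ)..u, ‖m₁ s - m₂ s‖) + ∫ s in (0 : ℝ)..u, dist (α s) (β s)) :=
          norm_sub_le_integral_of_integral_eq hf hu.1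
            ((hcont.mono (Icc_subset_Icc_right hu.2)).intervalIntegrable_of_Icc hu.1)
            (hd.mono_set (hsub u hu)) (hint₁.mono_set (hsub u hu)) (hint₂.mono_set (hsub u hu))
            (heq₁ u hu) (heq₂ u hu)
      _ ≤ K * C + K * ∫ s in (0 : ℝ)..u, ‖m₁ s - m₂ s‖ := by nlinarith
  calc ‖m₁ t - m₂ t‖ ≤ K * C * exp (K * (t - 0)) :=
        le_mul_exp_of_le_add_mul_integral hK hcont hkey t ht
    _ = K * exp (K * t) * C := by rw [sub_zero]; ring

/-- Grönwall comparison of two mean-field trajectories driven by different controls: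
if `m₁, m₂` solve the controlled integral equations with the same initial point `m₀`
and `f` is Lipschitz in both variables, then
`‖m₁(t) − m₂(t)‖ ≤ K e^{Kt} ∫₀^T d(α(s), β(s)) ds` for every `t ∈ [0,T]`. -/
theorem trajectories_dist_le_of_controls {A : Type*} [MetricSpace A]
    (S : ℕ) (hS : 1 ≤ S) (K T : ℝ) (hK : 0 ≤ K) (hT : 0 < T)
    (f : EuclideanSpace ℝ (Fin S) → A → EuclideanSpace ℝ (Fin S))
    (hf : ∀ (m m' : EuclideanSpace ℝ (Fin S)) (a a' : A),
      ‖f m a - f m' a'‖ ≤ K * (‖m - m'‖ + dist a a'))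
    (α β : ℝ → A)
    (hd : IntervalIntegrable (fun s => dist (α s) (β s)) volume 0 T)
    (m₀ : EuclideanSpace ℝ (Fin S))
    (m₁ m₂ : ℝ → EuclideanSpace ℝ (Fin S))
    (hm₁c : ContinuousOn m₁ (Set.Icc 0 T)) (hm₂c : ContinuousOn m₂ (Set.Icc 0 T))
    (hint₁ : IntervalIntegrable (fun s => f (m₁ s) (α s)) volume 0 T)
    (hint₂ : IntervalIntegrable (fun s => f (m₂ s) (β s)) volume 0 T)
    (heq₁ : ∀ t ∈ Set.Icc (0 : ℝ) T, m₁ t = m₀ + ∫ s in (0 : ℝ)..t, f (m₁ s) (α s))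
    (heq₂ : ∀ t ∈ Set.Icc (0 : ℝ) T, m₂ t = m₀ + ∫ s in (0 : ℝ)..t, f (m₂ s) (β s)) :
    ∀ t ∈ Set.Icc (0 : ℝ) T,
      ‖m₁ t - m₂ t‖ ≤ K * Real.exp (K * t) * ∫ s in (0 : ℝ)..T, dist (α s) (β s) :=
  trajectories_dist_le_of_controls_general S K T hK f hf α β hd m₀ m₁ m₂ hm₁c hm₂c hint₁ hint₂ heq₁
    heq₂
end
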